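/- arXiv:1608.06189 — 2 statements merged into one kernel-verified Lean document; each statement's English description precedes it below -/
import Mathlib

section
/- Let Σ_e ≻ 0 (p×p), Λ a p×r matrix, Γ a p×r matrix, Ω an r×r symmetric positive definite matrix, and S a p×p symmetric positive definite matrix with Ω + ΓᵀSΓ invertible. Then Λ_new = SΓ(Ω + ΓᵀSΓ)⁻¹ is the unique minimizer over Λ of the function Λ ↦ tr(Σ_e⁻¹ Λ Ω Λᵀ) + tr(Σ_e⁻¹ (I_p - ΛΓᵀ) S (I_p - ΛΓᵀ)ᵀ). -/
/-!
With `A = Ω + Γᵀ S Γ` and `Λ = S Γ A⁻¹`, the relation `Λ A = S Γ` lets one complete the square: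
the objective at `L` equals its value at `Λ` plus `tr (Σₑ⁻¹ (L - Λ) A (L - Λ)ᵀ)`.
Writing the positive definite matrices as `Σₑ⁻¹ = Xᴴ X` and `A = Yᴴ Y` with `X`, `Y` invertible,
this remainder is `‖X (L - Λ) Yᴴ‖²` in the Frobenius norm, which vanishes only at `L = Λ`.
-/

open Matrix

namespace Matrix

section PosDef

open scoped MatrixOrder ComplexOrder

variable {𝕜 m n : Type*} [RCLike 𝕜] [Fintype m] [Fintype n] [DecidableEq m] [DecidableEq n]
  {P : Matrix m m 𝕜} {Q : Matrix n n 𝕜}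

theorem PosDef.exists_trace_mul_mul_mul_conjTranspose_eq (hP : P.PosDef) (hQ : Q.PosDef)
    (M : Matrix m n 𝕜) :
    ∃ N : Matrix m n 𝕜, (P * M * Q * Mᴴ).trace = (N * Nᴴ).trace ∧ (N = 0 ↔ M = 0) := by
  obtain ⟨X, hX, rfl⟩ := CStarAlgebra.isStrictlyPositive_iff_eq_star_mul_self.mp
    hP.isStrictlyPositive
  obtain ⟨Y, hY, rfl⟩ := CStarAlgebra.isStrictlyPositive_iff_eq_star_mul_self.mp
    hQ.isStrictlyPositive
  have := hX.invertible
  have := hY.star.invertible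
  refine ⟨X * M * star Y, ?_, ?_⟩
  · simp only [star_eq_conjTranspose, conjTranspose_mul, conjTranspose_conjTranspose,
      Matrix.mul_assoc]
    rw [trace_mul_comm Xᴴ]
    simp only [Matrix.mul_assoc]
  · rw [← mul_right_inj_of_invertible X (x := M) (y := 0), Matrix.mul_zero,
      ← mul_left_inj_of_invertible (star Y) (x := X * M) (y := 0), Matrix.zero_mul]

theorem PosDef.trace_mul_mul_mul_conjTranspose_nonneg (hP : P.PosDef) (hQ : Q.PosDef)
    (M : Matrix m n 𝕜) : 0 ≤ (P * M * Q * Mᴴ).trace := by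
  obtain ⟨N, hN, -⟩ := hP.exists_trace_mul_mul_mul_conjTranspose_eq hQ M
  exact hN ▸ (posSemidef_self_mul_conjTranspose N).trace_nonneg

theorem PosDef.trace_mul_mul_mul_conjTranspose_eq_zero_iff (hP : P.PosDef) (hQ : Q.PosDef)
    {M : Matrix m n 𝕜} : (P * M * Q * Mᴴ).trace = 0 ↔ M = 0 := by
  obtain ⟨N, hN, hNM⟩ := hP.exists_trace_mul_mul_mul_conjTranspose_eq hQ M
  rw [hN, trace_mul_conjTranspose_self_eq_zero_iff, hNM]

end PosDef

end Matrix

section FactorLoading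

variable {R m n : Type*} [CommRing R] [Fintype m] [Fintype n] [DecidableEq m]

def factorLoadingObjective (E S : Matrix m m R) (Γ : Matrix m n R) (Ω : Matrix n n R)
    (L : Matrix m n R) : R :=
  (E * L * Ω * Lᵀ).trace + (E * (1 - L * Γᵀ) * S * (1 - L * Γᵀ)ᵀ).trace

variable {E S : Matrix m m R} {Γ : Matrix m n R} {Ω : Matrix n n R}

theorem factorLoadingObjective_eq (L : Matrix m n R) :
    factorLoadingObjective E S Γ Ω L =
      (E * L * (Ω + Γᵀ * S * Γ) * Lᵀ).trace - (E * S * Γ * Lᵀ).trace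
        - (E * L * Γᵀ * S).trace + (E * S).trace := by
  simp only [factorLoadingObjective, transpose_sub, transpose_mul, transpose_one,
    transpose_transpose, Matrix.mul_sub, Matrix.sub_mul, Matrix.mul_add, Matrix.add_mul,
    Matrix.mul_one, Matrix.mul_assoc, trace_add, trace_sub]
  ring

theorem factorLoadingObjective_eq_add_trace (hΩ : Ω.IsSymm) (hS : S.IsSymm) {Λ : Matrix m n R}
    (hΛ : Λ * (Ω + Γᵀ * S * Γ) = S * Γ) (L : Matrix m n R) :
    factorLoadingObjective E S Γ Ω L = factorLoadingObjective E S Γ Ω Λ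
      + (E * (L - Λ) * (Ω + Γᵀ * S * Γ) * (L - Λ)ᵀ).trace := by
  have hAΛ : (Ω + Γᵀ * S * Γ) * Λᵀ = Γᵀ * S := by
    have hA : (Ω + Γᵀ * S * Γ)ᵀ = Ω + Γᵀ * S * Γ := by simp [hΩ.eq, hS.eq, Matrix.mul_assoc]
    rw [← hA, ← transpose_mul, hΛ, transpose_mul, hS.eq]
  rw [factorLoadingObjective_eq, factorLoadingObjective_eq]
  generalize Ω + Γᵀ * S * Γ = A at hΛ hAΛ ⊢
  have hΛAΛ : (E * Λ * A * Λᵀ).trace = (E * S * Γ * Λᵀ).trace := by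
    rw [Matrix.mul_assoc E, hΛ, ← Matrix.mul_assoc]
  have hΛAΛ' : (E * Λ * A * Λᵀ).trace = (E * Λ * Γᵀ * S).trace := by
    rw [Matrix.mul_assoc (E * Λ), hAΛ, Matrix.mul_assoc (E * Λ)]
  have hsq : E * (L - Λ) * A * (L - Λ)ᵀ =
      E * L * A * Lᵀ - E * L * Γᵀ * S - E * S * Γ * Lᵀ + E * Λ * A * Λᵀ := by
    simp only [transpose_sub, Matrix.mul_sub, Matrix.sub_mul, Matrix.mul_assoc, hAΛ]
    simp only [← Matrix.mul_assoc, hΛ]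
    abel
  rw [hsq, trace_add, trace_sub, trace_sub]
  linear_combination -hΛAΛ - hΛAΛ'

end FactorLoading

theorem stmt16_general {p r : ℕ} (Se S : Matrix (Fin p) (Fin p) ℝ)
    (Γ : Matrix (Fin p) (Fin r) ℝ) (Ω : Matrix (Fin r) (Fin r) ℝ)
    (hSe : Se.PosDef) (hΩ : Ω.PosDef) (hS : S.PosDef) :
    (∀ L : Matrix (Fin p) (Fin r) ℝ,
      (Se⁻¹ * (S * Γ * (Ω + Γᵀ * S * Γ)⁻¹) * Ω * (S * Γ * (Ω + Γᵀ * S * Γ)⁻¹)ᵀ).trace +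
          (Se⁻¹ * (1 - S * Γ * (Ω + Γᵀ * S * Γ)⁻¹ * Γᵀ) * S *
            (1 - S * Γ * (Ω + Γᵀ * S * Γ)⁻¹ * Γᵀ)ᵀ).trace ≤
        (Se⁻¹ * L * Ω * Lᵀ).trace + (Se⁻¹ * (1 - L * Γᵀ) * S * (1 - L * Γᵀ)ᵀ).trace) ∧
    (∀ L : Matrix (Fin p) (Fin r) ℝ,
      (Se⁻¹ * L * Ω * Lᵀ).trace + (Se⁻¹ * (1 - L * Γᵀ) * S * (1 - L * Γᵀ)ᵀ).trace =
        (Se⁻¹ * (S * Γ * (Ω + Γᵀ * S * Γ)⁻¹) * Ω * (S * Γ * (Ω + Γᵀ * S * Γ)⁻¹)ᵀ).trace +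
          (Se⁻¹ * (1 - S * Γ * (Ω + Γᵀ * S * Γ)⁻¹ * Γᵀ) * S *
            (1 - S * Γ * (Ω + Γᵀ * S * Γ)⁻¹ * Γᵀ)ᵀ).trace →
      L = S * Γ * (Ω + Γᵀ * S * Γ)⁻¹) := by
  set A := Ω + Γᵀ * S * Γ
  set Λ := S * Γ * A⁻¹
  have hA : A.PosDef := by
    simpa [conjTranspose_eq_transpose_of_trivial] using
      hΩ.add_posSemidef (hS.posSemidef.conjTranspose_mul_mul_same Γ)
  have hΛ : Λ * A = S * Γ :=
    nonsing_inv_mul_cancel_right _ _ ((isUnit_iff_isUnit_det _).mp hA.isUnit)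
  have hsq := factorLoadingObjective_eq_add_trace (E := Se⁻¹)
    (isHermitian_iff_isSymm.mp hΩ.isHermitian) (isHermitian_iff_isSymm.mp hS.isHermitian) hΛ
  unfold factorLoadingObjective at hsq
  have hq (M : Matrix (Fin p) (Fin r) ℝ) : 0 ≤ (Se⁻¹ * M * A * Mᵀ).trace :=
    conjTranspose_eq_transpose_of_trivial M ▸ hSe.inv.trace_mul_mul_mul_conjTranspose_nonneg hA M
  have hq0 (M : Matrix (Fin p) (Fin r) ℝ) : (Se⁻¹ * M * A * Mᵀ).trace = 0 ↔ M = 0 :=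
    conjTranspose_eq_transpose_of_trivial M ▸ hSe.inv.trace_mul_mul_mul_conjTranspose_eq_zero_iff hA
  refine ⟨fun L ↦ ?_, fun L hL ↦ ?_⟩
  · linarith [hsq L, hq (L - Λ)]
  · exact sub_eq_zero.mp ((hq0 _).mp (by linarith [hsq L, hq (L - Λ)]))

theorem stmt16 {p r : ℕ} (Se S : Matrix (Fin p) (Fin p) ℝ)
    (Γ : Matrix (Fin p) (Fin r) ℝ) (Ω : Matrix (Fin r) (Fin r) ℝ)
    (hSe : Se.PosDef) (hΩ : Ω.PosDef) (hS : S.PosDef)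
    (hinv : IsUnit (Ω + Γᵀ * S * Γ)) :
    (∀ L : Matrix (Fin p) (Fin r) ℝ,
      (Se⁻¹ * (S * Γ * (Ω + Γᵀ * S * Γ)⁻¹) * Ω * (S * Γ * (Ω + Γᵀ * S * Γ)⁻¹)ᵀ).trace +
          (Se⁻¹ * (1 - S * Γ * (Ω + Γᵀ * S * Γ)⁻¹ * Γᵀ) * S *
            (1 - S * Γ * (Ω + Γᵀ * S * Γ)⁻¹ * Γᵀ)ᵀ).trace ≤
        (Se⁻¹ * L * Ω * Lᵀ).trace + (Se⁻¹ * (1 - L * Γᵀ) * S * (1 - L * Γᵀ)ᵀ).trace) ∧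
    (∀ L : Matrix (Fin p) (Fin r) ℝ,
      (Se⁻¹ * L * Ω * Lᵀ).trace + (Se⁻¹ * (1 - L * Γᵀ) * S * (1 - L * Γᵀ)ᵀ).trace =
        (Se⁻¹ * (S * Γ * (Ω + Γᵀ * S * Γ)⁻¹) * Ω * (S * Γ * (Ω + Γᵀ * S * Γ)⁻¹)ᵀ).trace +
          (Se⁻¹ * (1 - S * Γ * (Ω + Γᵀ * S * Γ)⁻¹ * Γᵀ) * S *
            (1 - S * Γ * (Ω + Γᵀ * S * Γ)⁻¹ * Γᵀ)ᵀ).trace →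
      L = S * Γ * (Ω + Γᵀ * S * Γ)⁻¹) :=
  stmt16_general Se S Γ Ω hSe hΩ hS
end

section
/- Let M be a p×p symmetric positive definite matrix. The unpenalized objective Σ ↦ log det(Σ) + tr(Σ⁻¹M) over symmetric positive definite Σ attains its unique minimum at Σ = M, with minimum value log det(M) + p. -/
/-!
Put `B = S^{-1/2} M S^{-1/2}`. Then `log det S + tr (S⁻¹ M) - (log det M + p)` equals
`tr B - log det B - p = ∑ᵢ (λᵢ - 1 - log λᵢ)` over the eigenvalues `λᵢ > 0` of `B`. Since
`log x ≤ x - 1` with equality only at `x = 1`, every term is nonnegative, and the sum vanishes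
only when all `λᵢ = 1`, i.e. `B = 1`, i.e. `S = M`.
-/

open Matrix
open scoped MatrixOrder

namespace Matrix

variable {n : Type*} [Fintype n] [DecidableEq n]

lemma IsHermitian.eq_one_of_eigenvalues_eq_one {A : Matrix n n ℝ} (hA : A.IsHermitian)
    (h : ∀ i, hA.eigenvalues i = 1) : A = 1 := by
  rw [hA.spectral_theorem, show hA.eigenvalues = 1 from funext h]
  simp

lemma PosDef.trace_sub_log_det_sub_card_eq_sum {B : Matrix n n ℝ} (hB : B.PosDef) :
    B.trace - Real.log B.det - Fintype.card n =
      ∑ i, (hB.isHermitian.eigenvalues i - 1 - Real.log (hB.isHermitian.eigenvalues i)) := by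
  rw [hB.isHermitian.trace_eq_sum_eigenvalues, hB.isHermitian.det_eq_prod_eigenvalues]
  simp only [RCLike.ofReal_real_eq_id, id]
  rw [Real.log_prod fun i _ => (hB.eigenvalues_pos i).ne']
  simp only [Finset.sum_sub_distrib, Finset.sum_const, Finset.card_univ, nsmul_eq_mul, mul_one]
  ring

lemma PosDef.card_le_trace_sub_log_det {B : Matrix n n ℝ} (hB : B.PosDef) :
    (Fintype.card n : ℝ) ≤ B.trace - Real.log B.det := by
  have := hB.trace_sub_log_det_sub_card_eq_sum ▸ Finset.sum_nonneg fun i _ =>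
    sub_nonneg.2 (Real.log_le_sub_one_of_pos (hB.eigenvalues_pos i))
  linarith

lemma PosDef.eq_one_of_trace_sub_log_det_eq_card {B : Matrix n n ℝ} (hB : B.PosDef)
    (h : B.trace - Real.log B.det = Fintype.card n) : B = 1 := by
  have hsum := hB.trace_sub_log_det_sub_card_eq_sum
  rw [h, sub_self, eq_comm, Finset.sum_eq_zero_iff_of_nonneg fun i _ =>
    sub_nonneg.2 (Real.log_le_sub_one_of_pos (hB.eigenvalues_pos i))] at hsum
  refine hB.isHermitian.eq_one_of_eigenvalues_eq_one fun i => ?_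
  by_contra hi
  have := Real.log_lt_sub_one_of_pos (hB.eigenvalues_pos i) hi
  linarith [hsum i (Finset.mem_univ i)]

/-- The witness is `B = S^{-1/2} M S^{-1/2}`. -/
lemma PosDef.exists_log_det_add_trace_inv_mul_eq {S M : Matrix n n ℝ} (hS : S.PosDef)
    (hM : M.PosDef) :
    ∃ B : Matrix n n ℝ, B.PosDef ∧ (B = 1 → S = M) ∧
      Real.log S.det + (S⁻¹ * M).trace = Real.log M.det + (B.trace - Real.log B.det) := by
  set R := CFC.sqrt S⁻¹
  have hRR : R * R = S⁻¹ := CFC.sqrt_mul_sqrt_self _ hS.inv.posSemidef.nonneg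
  have hRstar : star R = R := (IsSelfAdjoint.of_nonneg (CFC.sqrt_nonneg S⁻¹)).star_eq
  have hR : IsUnit R := (CFC.isUnit_sqrt_iff _ hS.inv.posSemidef.nonneg).2 hS.inv.isUnit
  refine ⟨R * M * R, ?_, fun hB => ?_, ?_⟩
  · simpa [hRstar] using (hR.posDef_star_left_conjugate_iff (x := M)).2 hM
  · have hRRM : R * R * M = 1 := by
      rw [mul_assoc]
      exact mul_eq_one_comm.1 hB
    exact inv_inj (hRR ▸ (inv_eq_left_inv hRRM).symm) (isUnit_iff_ne_zero.2 hS.det_pos.ne')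
  · have htrace : (S⁻¹ * M).trace = (R * M * R).trace := by
      rw [← hRR, trace_mul_cycle R M R]
    have hdet : (R * M * R).det = S⁻¹.det * M.det := by
      rw [← hRR, det_mul, det_mul, det_mul]
      ring
    rw [htrace, hdet, Real.log_mul hS.inv.det_pos.ne' hM.det_pos.ne', det_nonsing_inv,
      Ring.inverse_eq_inv', Real.log_inv]
    ring

end Matrix

theorem stmt18 {p : ℕ} (M : Matrix (Fin p) (Fin p) ℝ) (hM : M.PosDef) :
    (Real.log M.det + (M⁻¹ * M).trace = Real.log M.det + p) ∧
    (∀ S : Matrix (Fin p) (Fin p) ℝ, S.PosDef →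
      Real.log M.det + p ≤ Real.log S.det + (S⁻¹ * M).trace) ∧
    (∀ S : Matrix (Fin p) (Fin p) ℝ, S.PosDef →
      Real.log S.det + (S⁻¹ * M).trace = Real.log M.det + p → S = M) := by
  refine ⟨?_, fun S hS => ?_, fun S hS hmin => ?_⟩
  · rw [nonsing_inv_mul M (isUnit_iff_ne_zero.2 hM.det_pos.ne'), trace_one, Fintype.card_fin]
  · obtain ⟨B, hB, -, hobj⟩ := hS.exists_log_det_add_trace_inv_mul_eq hM
    have := hB.card_le_trace_sub_log_det
    rw [Fintype.card_fin] at this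
    linarith
  · obtain ⟨B, hB, hBS, hobj⟩ := hS.exists_log_det_add_trace_inv_mul_eq hM
    refine hBS (hB.eq_one_of_trace_sub_log_det_eq_card ?_)
    rw [Fintype.card_fin]
    linarith
end
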